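/- The spaces E_k(0) do not depend on the choice of defining function for M': let H : M → M' be a CR map of class C^k, let a be a real-analytic map from a neighborhood of 0 in ℂ^{N'} into the invertible d'×d' real matrices, and set ρ̃ = a·ρ' (so ρ̃ is again a real-analytic defining function for M' near 0). Then the space Ẽ_k(0) defined from ρ̃ and H by Ẽ_k(0) = span_ℂ{(Λ^α(ρ̃_{lZ'}∘(H,H̄)))(0) : |α| ≤ k, 1 ≤ l ≤ d'} equals E_k(0) defined from ρ' and H. -/

import Mathlib

open Complex Topology Filter

noncomputable section

/-- The local model for the generic submanifold `M`: a neighborhood of `0` in `ℂⁿ × ℝᵈ`. -/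
abbrev Dom (n d : ℕ) : Type := (Fin n → ℂ) × (Fin d → ℝ)

/-- The ambient space `ℂᴺ = ℂⁿ × ℂᵈ`. -/
abbrev Amb (n d : ℕ) : Type := (Fin n → ℂ) × (Fin d → ℂ)

/-- The Wirtinger derivative `∂/∂z̄ⱼ` of a function on `ℂⁿ × ℝᵈ`. -/
def dzbar {n d : ℕ} (j : Fin n) (f : Dom n d → ℂ) (p : Dom n d) : ℂ :=
  (1 / 2 : ℂ) * (fderiv ℝ f p (Pi.single j 1, 0) +
    Complex.I * fderiv ℝ f p (Pi.single j Complex.I, 0))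

/-- The derivative `∂/∂sₖ` of a function on `ℂⁿ × ℝᵈ`. -/
def dS {n d : ℕ} (k : Fin d) (f : Dom n d → ℂ) (p : Dom n d) : ℂ :=
  fderiv ℝ f p (0, Pi.single k 1)

/-- The matrix `I_d + i φ_s`. -/
def phiMat {n d : ℕ} (φ : Dom n d → Fin d → ℝ) (p : Dom n d) :
    Matrix (Fin d) (Fin d) ℂ := fun k l =>
  (if k = l then 1 else 0) + Complex.I * ((fderiv ℝ φ p (0, Pi.single l 1)) k : ℂ)

/-- The CR vector field `Λⱼ = ∂/∂z̄ⱼ − i (φ_{z̄ⱼ})ᵀ (I_d + iφ_s)⁻¹ ∂/∂s` of `M`. -/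
def Lambda {n d : ℕ} (φ : Dom n d → Fin d → ℝ) (j : Fin n) (f : Dom n d → ℂ)
    (p : Dom n d) : ℂ :=
  dzbar j f p - Complex.I *
    ∑ l, (∑ k, dzbar j (fun q => ((φ q k : ℝ) : ℂ)) p * (phiMat φ p)⁻¹ k l) * dS l f p

/-- `Λ^α = Λ₁^{α₁} ⋯ Λₙ^{αₙ}`. -/
def LambdaPow {n d : ℕ} (φ : Dom n d → Fin d → ℝ) (α : Fin n → ℕ)
    (f : Dom n d → ℂ) : Dom n d → ℂ :=
  (((List.finRange n).map fun j => (Lambda φ j)^[α j]).foldr (· ∘ ·) id) f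

/-- The Wirtinger (complex) gradient component `∂r/∂Z'ₘ` of a real-valued function on `ℂ^{N'}`. -/
def gradZ {N' : ℕ} (m : Fin N') (r : (Fin N' → ℂ) → ℝ) (Z : Fin N' → ℂ) : ℂ :=
  (1 / 2 : ℂ) * ((fderiv ℝ r Z (Pi.single m 1) : ℂ) -
    Complex.I * (fderiv ℝ r Z (Pi.single m Complex.I) : ℂ))

/-- The space `E_k(0)` spanned by the vectors `Λ^α (ρ'_{l Z'}(H, H̄))(0)`, `|α| ≤ k`. -/
def Ek {n d N' d' : ℕ} (φ : Dom n d → Fin d → ℝ) (ρ : Fin d' → (Fin N' → ℂ) → ℝ)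
    (H : Dom n d → Fin N' → ℂ) (k : ℕ) : Submodule ℂ (Fin N' → ℂ) :=
  Submodule.span ℂ { v | ∃ (α : Fin n → ℕ) (l : Fin d'), (∑ j, α j) ≤ k ∧
    v = fun m => LambdaPow φ α (fun p => gradZ m (ρ l) (H p)) 0 }

/-- The identification `ι(z,s) = (z, s + iφ(z,z̄,s))` of `ℂⁿ × ℝᵈ` with `M ⊆ ℂᴺ`. -/
def iotaM {n d : ℕ} (φ : Dom n d → Fin d → ℝ) (p : Dom n d) : Amb n d :=
  (p.1, fun k => (p.2 k : ℂ) + Complex.I * ((φ p k : ℝ) : ℂ))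

/-- The map `Ψ(z,s,t) = (z, s + it + iφ̂(z,z̄,s+it))`. -/
def PsiW {n d : ℕ} (φhat : Amb n d → Fin d → ℂ)
    (q : (Fin n → ℂ) × (Fin d → ℝ) × (Fin d → ℝ)) : Amb n d :=
  (q.1, fun k => (q.2.1 k : ℂ) + Complex.I * (q.2.2 k : ℂ) +
    Complex.I * φhat (q.1, fun k' => (q.2.1 k' : ℂ) + Complex.I * (q.2.2 k' : ℂ)) k)

/-- The wedge `W_Γ^ε` in the coordinates `(z,s,t)`. -/
def WedgeSet {n d : ℕ} (Γ : Set (Fin d → ℝ)) (ε : ℝ) :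
    Set ((Fin n → ℂ) × (Fin d → ℝ) × (Fin d → ℝ)) :=
  {q | ‖q.1‖ < ε ∧ ‖q.2.1‖ < ε ∧ ‖q.2.2‖ < ε ∧ q.2.2 ∈ Γ}

/-- `h` extends continuously to a holomorphic function in the wedge `W_Γ`. -/
def ExtendsToWedge {n d : ℕ} (φ : Dom n d → Fin d → ℝ) (φhat : Amb n d → Fin d → ℂ)
    (Γ : Set (Fin d → ℝ)) (h : Dom n d → ℂ) : Prop :=
  ∃ ε > (0 : ℝ), ∃ F : Amb n d → ℂ,
    DifferentiableOn ℂ F (PsiW φhat '' WedgeSet Γ ε) ∧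
    ContinuousOn F (PsiW φhat '' WedgeSet Γ ε ∪
      iotaM φ '' {p : Dom n d | ‖p.1‖ < ε ∧ ‖p.2‖ < ε}) ∧
    ∀ p : Dom n d, ‖p.1‖ < ε → ‖p.2‖ < ε → F (iotaM φ p) = h p

/-!
Along `H` one has `ρ'(H) = 0`, so differentiating `ρ̃ = a ρ'` gives `ρ̃_{Z'}(H) = a(H) ρ'_{Z'}(H)`
near `0`, and inverting, `ρ'_{Z'}(H) = a(H)⁻¹ ρ̃_{Z'}(H)`. Applying `Λ^α` and expanding by
Leibniz's rule, every generator of one space is a combination, with the constant coefficients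
`Λ^β(a(H))(0)` (resp. `Λ^β(a(H)⁻¹)(0)`), of generators `Λ^γ(ρ_{Z'}(H))(0)` of the other, `γ ≤ α`.
-/

section MatrixInverse

variable {E 𝕜 ι : Type*} [NormedAddCommGroup E] [NormedSpace ℝ E] [NormedField 𝕜]
  [NormedAlgebra ℝ 𝕜] [Fintype ι] [DecidableEq ι] {M : E → Matrix ι ι 𝕜} {x : E}
  {m : WithTop ℕ∞}

theorem ContDiffAt.matrix_det (hM : ∀ i j, ContDiffAt ℝ m (fun p => M p i j) x) :
    ContDiffAt ℝ m (fun p => (M p).det) x := by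
  simp_rw [Matrix.det_apply, Units.smul_def]
  exact ContDiffAt.sum fun σ _ => (contDiffAt_prod fun i _ => hM (σ i) i).const_smul _

theorem ContDiffAt.matrix_adjugate (hM : ∀ i j, ContDiffAt ℝ m (fun p => M p i j) x)
    (i j : ι) : ContDiffAt ℝ m (fun p => (M p).adjugate i j) x := by
  simp_rw [Matrix.adjugate_apply]
  refine ContDiffAt.matrix_det fun i' j' => ?_
  simp_rw [Matrix.updateRow_apply]
  split_ifs
  exacts [contDiffAt_const, hM i' j']

theorem ContDiffAt.matrix_inv (hM : ∀ i j, ContDiffAt ℝ m (fun p => M p i j) x)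
    (hx : (M x).det ≠ 0) (i j : ι) : ContDiffAt ℝ m (fun p => (M p)⁻¹ i j) x := by
  simp_rw [Matrix.inv_def, Matrix.smul_apply, Ring.inverse_eq_inv, smul_eq_mul]
  exact ((ContDiffAt.matrix_det hM).inv hx).mul (ContDiffAt.matrix_adjugate hM i j)

end MatrixInverse

open Matrix in
theorem Matrix.map_inv_mulVec_map_mulVec {τ R S : Type*} [Fintype τ] [DecidableEq τ] [CommRing R]
    [CommRing S] (f : R →+* S) {A : Matrix τ τ R} (hA : IsUnit A) (w : τ → S) :
    A⁻¹.map f *ᵥ (A.map f *ᵥ w) = w := by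
  rw [Matrix.mulVec_mulVec, ← Matrix.map_mul,
    Matrix.nonsing_inv_mul _ ((Matrix.isUnit_iff_isUnit_det A).1 hA),
    Matrix.map_one _ f.map_zero f.map_one, Matrix.one_mulVec]

theorem ContDiffAt.fderiv_apply {E F : Type*} [NormedAddCommGroup E] [NormedSpace ℝ E]
    [NormedAddCommGroup F] [NormedSpace ℝ F] {f : E → F} {x : E} {m : ℕ}
    (hf : ContDiffAt ℝ (m + 1) f x) (v : E) : ContDiffAt ℝ m (fun p => fderiv ℝ f p v) x :=
  (hf.fderiv_right le_rfl).clm_apply contDiffAt_const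

theorem ContDiffAt.ofReal {E : Type*} [NormedAddCommGroup E] [NormedSpace ℝ E] {f : E → ℝ}
    {x : E} {m : WithTop ℕ∞} (hf : ContDiffAt ℝ m f x) : ContDiffAt ℝ m (fun p => (f p : ℂ)) x :=
  ofRealCLM.contDiff.contDiffAt.comp x hf

section FirstOrderOp

variable {E ι : Type*} [NormedAddCommGroup E] [NormedSpace ℝ E] [Fintype ι]

def firstOrderOp (b : ι → E → ℂ) (v : ι → E) (f : E → ℂ) (p : E) : ℂ :=
  ∑ i, b i p * fderiv ℝ f p (v i)

variable (b : ι → E → ℂ) (v : ι → E) {f g : E → ℂ} {p x : E}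

theorem firstOrderOp_congr (h : f =ᶠ[𝓝 p] g) : firstOrderOp b v f p = firstOrderOp b v g p := by
  simp only [firstOrderOp, h.fderiv_eq]

theorem Filter.EventuallyEq.firstOrderOp (h : f =ᶠ[𝓝 x] g) :
    firstOrderOp b v f =ᶠ[𝓝 x] firstOrderOp b v g := by
  filter_upwards [eventually_eventually_nhds.2 h] with p hp using firstOrderOp_congr b v hp

theorem firstOrderOp_sum {κ : Type*} (t : Finset κ) {F : κ → E → ℂ}
    (hF : ∀ i ∈ t, DifferentiableAt ℝ (F i) p) :
    firstOrderOp b v (fun q => ∑ i ∈ t, F i q) p = ∑ i ∈ t, firstOrderOp b v (F i) p := by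
  simp only [firstOrderOp, fderiv_fun_sum hF, _root_.sum_apply, Finset.mul_sum]
  exact Finset.sum_comm

theorem firstOrderOp_list_sum {κ : Type*} (L : List κ) {F : κ → E → ℂ}
    (hF : ∀ i ∈ L, DifferentiableAt ℝ (F i) p) :
    firstOrderOp b v (fun q => (L.map (F · q)).sum) p =
      (L.map fun i => firstOrderOp b v (F i) p).sum := by
  simp_rw [← Fin.sum_univ_fun_getElem]
  exact firstOrderOp_sum b v _ fun i _ => hF _ (List.getElem_mem _)

theorem firstOrderOp_mul (hf : DifferentiableAt ℝ f p) (hg : DifferentiableAt ℝ g p) :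
    firstOrderOp b v (fun q => f q * g q) p =
      firstOrderOp b v f p * g p + f p * firstOrderOp b v g p := by
  simp only [firstOrderOp, fderiv_fun_mul hf hg, _root_.add_apply,
    _root_.smul_apply, smul_eq_mul, Finset.sum_mul, Finset.mul_sum,
    ← Finset.sum_add_distrib]
  exact Finset.sum_congr rfl fun i _ => by ring

variable {b}

theorem ContDiffAt.firstOrderOp {m : ℕ} (hb : ∀ i, ContDiffAt ℝ m (b i) x)
    (hf : ContDiffAt ℝ (m + 1) f x) : ContDiffAt ℝ m (firstOrderOp b v f) x :=
  ContDiffAt.sum fun i _ => (hb i).mul (hf.fderiv_apply (v i))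

end FirstOrderOp

section Words

variable {E ι κ : Type*} [NormedAddCommGroup E] [NormedSpace ℝ E] [Fintype ι]
  (b : κ → ι → E → ℂ) (v : κ → ι → E)

def opWord (w : List κ) (f : E → ℂ) : E → ℂ :=
  w.foldr (fun j => firstOrderOp (b j) (v j)) f

@[simp] theorem opWord_nil (f : E → ℂ) : opWord b v [] f = f := rfl

@[simp] theorem opWord_cons (j : κ) (w : List κ) (f : E → ℂ) :
    opWord b v (j :: w) f = firstOrderOp (b j) (v j) (opWord b v w f) := rfl

theorem opWord_append (w₁ w₂ : List κ) (f : E → ℂ) :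
    opWord b v (w₁ ++ w₂) f = opWord b v w₁ (opWord b v w₂ f) :=
  List.foldr_append ..

/-- All ways of distributing the letters of a word over two subwords, with multiplicity. -/
def splits {α : Type*} : List α → List (List α × List α)
  | [] => [([], [])]
  | a :: t => (splits t).flatMap fun q => [(a :: q.1, q.2), (q.1, a :: q.2)]

theorem sublist_of_mem_splits {α : Type*} :
    ∀ {w : List α} {q : List α × List α}, q ∈ splits w → q.1.Sublist w ∧ q.2.Sublist w
  | [], q, hq => by
    rw [splits, List.mem_singleton] at hq
    subst hq
    exact ⟨.slnil, .slnil⟩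
  | a :: t, q, hq => by
    obtain ⟨q', hq', hq⟩ := List.mem_flatMap.1 hq
    obtain ⟨h₁, h₂⟩ := sublist_of_mem_splits hq'
    rcases List.mem_pair.1 hq with rfl | rfl
    exacts [⟨h₁.cons_cons a, h₂.cons a⟩, ⟨h₁.cons a, h₂.cons_cons a⟩]

variable {b v} {f g : E → ℂ} {x : E} {k : ℕ}

theorem Filter.EventuallyEq.opWord (h : f =ᶠ[𝓝 x] g) (w : List κ) :
    opWord b v w f =ᶠ[𝓝 x] opWord b v w g := by
  induction w with
  | nil => exact h
  | cons j w ih => exact ih.firstOrderOp (b j) (v j)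

section Smooth

variable (hb : ∀ j i, ContDiffAt ℝ k (b j i) x)
include hb

theorem ContDiffAt.opWord (hf : ContDiffAt ℝ k f x) :
    ∀ {m : ℕ} (w : List κ), w.length + m ≤ k → ContDiffAt ℝ m (opWord b v w f) x
  | m, [], hw => hf.of_le (by exact_mod_cast (by simpa using hw))
  | m, j :: w, hw => by
    have ih := ContDiffAt.opWord hf (m := m + 1) w (by simp at hw; omega)
    exact ih.firstOrderOp (v j) fun i => (hb j i).of_le (by exact_mod_cast (by simp at hw; omega))

theorem eventually_differentiableAt_opWord (hf : ContDiffAt ℝ k f x) {w : List κ}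
    (hw : w.length < k) : ∀ᶠ p in 𝓝 x, DifferentiableAt ℝ (opWord b v w f) p :=
  ((ContDiffAt.opWord hb hf (m := 1) w hw).eventually (by simp)).mono fun _ hp =>
    hp.differentiableAt one_ne_zero

theorem opWord_sum {τ : Type*} (t : Finset τ) {F : τ → E → ℂ}
    (hF : ∀ i ∈ t, ContDiffAt ℝ k (F i) x) :
    ∀ w : List κ, w.length ≤ k →
      opWord b v w (fun q => ∑ i ∈ t, F i q) =ᶠ[𝓝 x] fun q => ∑ i ∈ t, opWord b v w (F i) q
  | [], _ => by simp
  | j :: w, hw => by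
    have hw' : w.length < k := by simpa using hw
    have hdiff : ∀ᶠ p in 𝓝 x, ∀ i ∈ t, DifferentiableAt ℝ (opWord b v w (F i)) p :=
      t.eventually_all.2 fun i hi => eventually_differentiableAt_opWord hb (hF i hi) hw'
    filter_upwards [(opWord_sum t hF w hw'.le).firstOrderOp (b j) (v j), hdiff] with p hp hp'
    rw [opWord_cons, hp, firstOrderOp_sum _ _ t hp']
    rfl

theorem opWord_mul (hf : ContDiffAt ℝ k f x) (hg : ContDiffAt ℝ k g x) :
    ∀ w : List κ, w.length ≤ k →
      opWord b v w (fun q => f q * g q) =ᶠ[𝓝 x]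
        fun p => ((splits w).map fun q => opWord b v q.1 f p * opWord b v q.2 g p).sum
  | [], _ => by simp [splits]
  | j :: w, hw => by
    have hw' : w.length < k := by simpa using hw
    have hdiff : ∀ᶠ p in 𝓝 x, ∀ q ∈ splits w,
        DifferentiableAt ℝ (opWord b v q.1 f) p ∧ DifferentiableAt ℝ (opWord b v q.2 g) p := by
      refine (Filter.eventually_all_finite (splits w).finite_toSet).2 fun q hq => ?_
      obtain ⟨h₁, h₂⟩ := sublist_of_mem_splits hq
      exact (eventually_differentiableAt_opWord hb hf (h₁.length_le.trans_lt hw')).and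
        (eventually_differentiableAt_opWord hb hg (h₂.length_le.trans_lt hw'))
    filter_upwards [(opWord_mul hf hg w hw'.le).firstOrderOp (b j) (v j), hdiff] with p hp hp'
    rw [opWord_cons, hp,
      firstOrderOp_list_sum (F := fun q p => opWord b v q.1 f p * opWord b v q.2 g p) _ _ _
        fun q hq => (hp' q hq).1.mul (hp' q hq).2,
      splits, List.flatMap, List.map_flatten, List.sum_flatten, List.map_map, List.map_map]
    refine congrArg List.sum (List.map_congr_left fun q hq => ?_)
    simp [firstOrderOp_mul _ _ (hp' q hq).1 (hp' q hq).2]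

end Smooth

end Words

section SortedWords

variable {n : ℕ}

def wordOf (α : Fin n → ℕ) : List (Fin n) :=
  (List.finRange n).flatMap fun j => List.replicate (α j) j

theorem length_wordOf (α : Fin n → ℕ) : (wordOf α).length = ∑ j, α j := by
  simp [wordOf, List.length_flatMap, ← Fin.sum_univ_def]

theorem count_wordOf (α : Fin n → ℕ) (j : Fin n) : (wordOf α).count j = α j := by
  simp [wordOf, List.count_flatMap, ← Fin.sum_univ_def, Function.comp_def, List.count_replicate]

theorem pairwise_le_wordOf (α : Fin n → ℕ) : (wordOf α).Pairwise (· ≤ ·) := by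
  simpa [wordOf, List.pairwise_flatMap] using
    (List.pairwise_lt_finRange n).imp fun h _ _ => h.le

theorem eq_wordOf_count {u : List (Fin n)} (hu : u.Pairwise (· ≤ ·)) :
    u = wordOf fun j => u.count j :=
  (List.perm_iff_count.2 fun j => (count_wordOf (fun j => u.count j) j).symm).eq_of_pairwise' hu
    (pairwise_le_wordOf _)

end SortedWords

section WordSpan

variable {E ι μ τ : Type*} [NormedAddCommGroup E] [NormedSpace ℝ E] [Fintype ι] {n : ℕ}
  (b : Fin n → ι → E → ℂ) (v : Fin n → ι → E)

def wordSpan (g : τ → E → μ → ℂ) (k : ℕ) (x : E) : Submodule ℂ (μ → ℂ) :=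
  Submodule.span ℂ {u | ∃ (α : Fin n → ℕ) (l : τ), ∑ j, α j ≤ k ∧
    u = fun m => opWord b v (wordOf α) (fun p => g l p m) x}

variable {b v} {g : τ → E → μ → ℂ} {k : ℕ} {x : E}

theorem opWord_mem_wordSpan {u : List (Fin n)} (hu : u.Pairwise (· ≤ ·)) (hk : u.length ≤ k)
    (l : τ) : (fun m => opWord b v u (fun p => g l p m) x) ∈ wordSpan b v g k x := by
  refine Submodule.subset_span ⟨fun j => u.count j, l, ?_, by rw [← eq_wordOf_count hu]⟩
  rwa [← length_wordOf, ← eq_wordOf_count hu]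

/-- Leibniz's rule expresses the jets of `∑ c g` through those of `g` along subwords; subwords of
a sorted word are sorted, so no commutation of the operators is needed. -/
theorem wordSpan_le_of_eventuallyEq {σ : Type*} [Fintype σ] {g' : σ → E → μ → ℂ}
    (hb : ∀ j i, ContDiffAt ℝ k (b j i) x) (c : τ → σ → E → ℂ)
    (hc : ∀ l ν, ContDiffAt ℝ k (c l ν) x) (hg' : ∀ ν m, ContDiffAt ℝ k (fun p => g' ν p m) x)
    (h : ∀ l m, (fun p => g l p m) =ᶠ[𝓝 x] fun p => ∑ ν, c l ν p * g' ν p m) :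
    wordSpan b v g k x ≤ wordSpan b v g' k x := by
  refine Submodule.span_le.2 ?_
  rintro _ ⟨α, l, hα, rfl⟩
  set w := wordOf α
  have hw : w.length ≤ k := (length_wordOf α).trans_le hα
  have hexpand : (fun m => opWord b v w (fun p => g l p m) x) = ∑ ν,
      ((splits w).map fun q => opWord b v q.1 (c l ν) x •
        fun m => opWord b v q.2 (fun p => g' ν p m) x).sum := by
    ext m
    have hcg : ∀ ν ∈ Finset.univ, ContDiffAt ℝ k (fun p => c l ν p * g' ν p m) x :=
      fun ν _ => (hc l ν).mul (hg' ν m)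
    rw [((h l m).opWord w |>.trans (opWord_sum hb Finset.univ hcg w hw)).eq_of_nhds]
    simp [Finset.sum_apply, Pi.list_sum_apply, Function.comp_def,
      (opWord_mul hb (hc l _) (hg' _ m) w hw).eq_of_nhds]
  rw [hexpand]
  refine Submodule.sum_mem _ fun ν _ => list_sum_mem (List.forall_mem_map.2 fun q hq => ?_)
  have hq := (sublist_of_mem_splits hq).2
  exact Submodule.smul_mem _ _
    (opWord_mem_wordSpan ((pairwise_le_wordOf α).sublist hq) (hq.length_le.trans hw) ν)

end WordSpan

section Gradient

variable {N' : ℕ}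

theorem ContDiffAt.gradZ {r : (Fin N' → ℂ) → ℝ} {Z : Fin N' → ℂ} {m : ℕ}
    (hr : ContDiffAt ℝ (m + 1) r Z) (i : Fin N') : ContDiffAt ℝ m (gradZ i r) Z :=
  contDiffAt_const.mul
    ((hr.fderiv_apply _).ofReal.sub (contDiffAt_const.mul (hr.fderiv_apply _).ofReal))

theorem gradZ_sum_mul_of_eq_zero {τ : Type*} [Fintype τ] {A r : τ → (Fin N' → ℂ) → ℝ}
    {Z : Fin N' → ℂ} (hA : ∀ ν, DifferentiableAt ℝ (A ν) Z)
    (hr : ∀ ν, DifferentiableAt ℝ (r ν) Z) (hr0 : ∀ ν, r ν Z = 0) (i : Fin N') :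
    gradZ i (fun W => ∑ ν, A ν W * r ν W) Z = ∑ ν, (A ν Z : ℂ) * gradZ i (r ν) Z := by
  have hD : fderiv ℝ (fun W => ∑ ν, A ν W * r ν W) Z = ∑ ν, A ν Z • fderiv ℝ (r ν) Z := by
    rw [fderiv_fun_sum fun ν _ => (hA ν).fun_mul (hr ν)]
    refine Finset.sum_congr rfl fun ν _ => ?_
    simp [fderiv_fun_mul (hA ν) (hr ν), hr0 ν]
  simp only [_root_.gradZ, hD, _root_.sum_apply, _root_.smul_apply, smul_eq_mul, ofReal_sum,
    ofReal_mul, Finset.mul_sum, ← Finset.sum_sub_distrib]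
  exact Finset.sum_congr rfl fun ν _ => by ring

end Gradient

section CRVectorFields

variable {n d : ℕ}

/-- `Λⱼ` as a `firstOrderOp`: the two `inl` terms make up `∂/∂z̄ⱼ`, the `inr l` term is the
`∂/∂s_l` part. -/
def lambdaCoef (φ : Dom n d → Fin d → ℝ) (j : Fin n) : Fin 2 ⊕ Fin d → Dom n d → ℂ :=
  Sum.elim ![fun _ => 1 / 2, fun _ => I / 2] fun l p =>
    -I * ∑ k, dzbar j (fun q => ((φ q k : ℝ) : ℂ)) p * (phiMat φ p)⁻¹ k l

def lambdaDir (j : Fin n) : Fin 2 ⊕ Fin d → Dom n d :=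
  Sum.elim ![(Pi.single j 1, 0), (Pi.single j I, 0)] fun l => (0, Pi.single l 1)

theorem lambda_eq_firstOrderOp (φ : Dom n d → Fin d → ℝ) (j : Fin n) :
    Lambda φ j = firstOrderOp (lambdaCoef φ j) (lambdaDir j) := by
  ext f p
  simp only [firstOrderOp, lambdaCoef, lambdaDir, Fintype.sum_sum_type, Fin.sum_univ_two,
    Sum.elim_inl, Sum.elim_inr, Matrix.cons_val_zero, Matrix.cons_val_one, neg_mul,
    Finset.sum_neg_distrib, mul_assoc]
  rw [Lambda, dzbar, Finset.mul_sum]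
  simp only [dS]
  ring

theorem opWord_replicate (φ : Dom n d → Fin d → ℝ) (j : Fin n) (m : ℕ) (f : Dom n d → ℂ) :
    opWord (lambdaCoef φ) lambdaDir (List.replicate m j) f = (Lambda φ j)^[m] f := by
  induction m with
  | zero => rfl
  | succ m ih => rw [List.replicate_succ, opWord_cons, ih, Function.iterate_succ_apply',
      lambda_eq_firstOrderOp]

theorem lambdaPow_eq_opWord (φ : Dom n d → Fin d → ℝ) (α : Fin n → ℕ) (f : Dom n d → ℂ) :
    LambdaPow φ α f = opWord (lambdaCoef φ) lambdaDir (wordOf α) f := by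
  suffices ∀ L : List (Fin n), (L.map fun j => (Lambda φ j)^[α j]).foldr (· ∘ ·) id f =
      opWord (lambdaCoef φ) lambdaDir (L.flatMap fun j => List.replicate (α j) j) f from
    this (List.finRange n)
  intro L
  induction L with
  | nil => rfl
  | cons j L ih =>
    rw [List.map_cons, List.foldr_cons, List.flatMap_cons, opWord_append, opWord_replicate, ← ih]
    rfl

theorem Ek_eq_wordSpan {N' d' : ℕ} (φ : Dom n d → Fin d → ℝ) (ρ : Fin d' → (Fin N' → ℂ) → ℝ)
    (H : Dom n d → Fin N' → ℂ) (k : ℕ) :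
    Ek φ ρ H k = wordSpan (lambdaCoef φ) lambdaDir (fun l p m => gradZ m (ρ l) (H p)) k 0 := by
  simp only [Ek, wordSpan, lambdaPow_eq_opWord]

theorem ContDiffAt.dzbar {f : Dom n d → ℂ} {x : Dom n d} {m : ℕ}
    (hf : ContDiffAt ℝ (m + 1) f x) (j : Fin n) : ContDiffAt ℝ m (_root_.dzbar j f) x :=
  contDiffAt_const.mul ((hf.fderiv_apply _).add (contDiffAt_const.mul (hf.fderiv_apply _)))

theorem contDiffAt_lambdaCoef {φ : Dom n d → Fin d → ℝ} (hφ : AnalyticAt ℝ φ 0)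
    (hdφ : fderiv ℝ φ 0 = 0) (m : ℕ) (j : Fin n) (i : Fin 2 ⊕ Fin d) :
    ContDiffAt ℝ m (lambdaCoef φ j i) 0 := by
  rcases i with i | l
  · fin_cases i <;> exact contDiffAt_const
  have hφ' : ∀ m' : ℕ, ContDiffAt ℝ m' φ 0 := fun _ => hφ.contDiffAt
  have hMat : ∀ k l', ContDiffAt ℝ m (fun p => phiMat φ p k l') 0 := fun k l' =>
    contDiffAt_const.add (contDiffAt_const.mul
      (contDiffAt_pi.1 ((hφ' (m + 1)).fderiv_apply _) k).ofReal)
  have hdet : (phiMat φ 0).det ≠ 0 := by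
    have : phiMat φ 0 = 1 := by
      ext k l'
      simp [phiMat, hdφ, Matrix.one_apply]
    simp [this]
  refine contDiffAt_const.mul (ContDiffAt.sum fun k _ => ?_)
  exact (ContDiffAt.dzbar (contDiffAt_pi.1 (hφ' (m + 1)) k).ofReal j).mul
    (ContDiffAt.matrix_inv hMat hdet k l)

end CRVectorFields

theorem Ek_le_of_eventuallyEq_mulVec {n d N' d' k : ℕ} {φ : Dom n d → Fin d → ℝ}
    (hφ : AnalyticAt ℝ φ 0) (hdφ : fderiv ℝ φ 0 = 0) {ρ₁ ρ₂ : Fin d' → (Fin N' → ℂ) → ℝ}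
    {H : Dom n d → Fin N' → ℂ} (hH : ContDiffAt ℝ k H 0) (hH0 : H 0 = 0)
    (hρ₂ : ∀ ν, ContDiffAt ℝ (k + 1) (ρ₂ ν) 0) {c : (Fin N' → ℂ) → Matrix (Fin d') (Fin d') ℝ}
    (hc : ∀ l ν, ContDiffAt ℝ k (fun Z => c Z l ν) 0)
    (h : ∀ᶠ p in 𝓝 0, ∀ m, (fun l => gradZ m (ρ₁ l) (H p)) =
      ((c (H p)).map ofRealHom).mulVec fun ν => gradZ m (ρ₂ ν) (H p)) :
    Ek φ ρ₁ H k ≤ Ek φ ρ₂ H k := by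
  have hcomp {G : (Fin N' → ℂ) → ℂ} (hG : ContDiffAt ℝ k G 0) :
      ContDiffAt ℝ k (fun p => G (H p)) 0 := (hH0 ▸ hG).comp 0 hH
  rw [Ek_eq_wordSpan, Ek_eq_wordSpan]
  refine wordSpan_le_of_eventuallyEq (contDiffAt_lambdaCoef hφ hdφ k)
    (fun l ν p => (c (H p) l ν : ℂ)) (fun l ν => hcomp (hc l ν).ofReal)
    (fun ν m => hcomp ((hρ₂ ν).gradZ m)) fun l m => ?_
  filter_upwards [h] with p hp using congrFun (hp m) l

theorem Ek_indep_defining_function_general {n d N' d' k : ℕ}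
    -- the source manifold M, in normal form
    (φ : Dom n d → Fin d → ℝ)
    (hφan : ∀ᶠ p in 𝓝 (0 : Dom n d), AnalyticAt ℝ φ p)
    (hdφ0 : fderiv ℝ φ 0 = 0)
    -- the target manifold M', generic through 0
    (ρ : Fin d' → (Fin N' → ℂ) → ℝ)
    (hρan : ∀ l, ∀ᶠ Z in 𝓝 (0 : Fin N' → ℂ), AnalyticAt ℝ (ρ l) Z)
    -- the CR map H : M → M' of class C^k
    (H : Dom n d → Fin N' → ℂ) (U : Set (Dom n d)) (hU : IsOpen U) (h0U : (0 : Dom n d) ∈ U)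
    (hHsm : ContDiffOn ℝ k H U) (hH0 : H 0 = 0)
    (hHM' : ∀ p ∈ U, ∀ l, ρ l (H p) = 0)
    -- a real-analytic map into the invertible d'×d' real matrices
    (a : (Fin N' → ℂ) → Matrix (Fin d') (Fin d') ℝ)
    (haan : ∀ l m, ∀ᶠ Z in 𝓝 (0 : Fin N' → ℂ), AnalyticAt ℝ (fun Z' => a Z' l m) Z)
    (hainv : ∀ᶠ Z in 𝓝 (0 : Fin N' → ℂ), IsUnit (a Z)) :
    -- conclusion: ρ̃ = a·ρ' defines the same spaces E_k(0)
    Ek φ (fun l Z => ∑ m, a Z l m * ρ m Z) H k = Ek φ ρ H k := by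
  set aρ := fun l Z => ∑ m, a Z l m * ρ m Z
  have hH : ContDiffAt ℝ k H 0 := hHsm.contDiffAt (hU.mem_nhds h0U)
  have hHt : Tendsto H (𝓝 0) (𝓝 0) := hH0 ▸ hH.continuousAt.tendsto
  have ha l ν : ContDiffAt ℝ (k + 1) (fun Z => a Z l ν) 0 := (haan l ν).self_of_nhds.contDiffAt
  have hρ ν : ContDiffAt ℝ (k + 1) (ρ ν) 0 := (hρan ν).self_of_nhds.contDiffAt
  have hmul : ∀ᶠ p in 𝓝 0, ∀ m, (fun l => gradZ m (aρ l) (H p)) =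
      ((a (H p)).map ofRealHom).mulVec fun ν => gradZ m (ρ ν) (H p) := by
    filter_upwards [hU.mem_nhds h0U, hHt.eventually (eventually_all.2 hρan),
      hHt.eventually (eventually_all.2 fun l => eventually_all.2 (haan l))] with p hpU hρp hap m
    ext l
    exact gradZ_sum_mul_of_eq_zero (fun ν => (hap l ν).differentiableAt)
      (fun ν => (hρp ν).differentiableAt) (hHM' p hpU) m
  have hinv : ∀ᶠ p in 𝓝 0, ∀ m, (fun l => gradZ m (ρ l) (H p)) =
      ((a (H p))⁻¹.map ofRealHom).mulVec fun ν => gradZ m (aρ ν) (H p) := by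
    filter_upwards [hmul, hHt.eventually hainv] with p hp hinv m
    rw [hp m, Matrix.map_inv_mulVec_map_mulVec _ hinv]
  have hdet : (a 0).det ≠ 0 := ((Matrix.isUnit_iff_isUnit_det _).1 hainv.self_of_nhds).ne_zero
  have ha' l ν : ContDiffAt ℝ k (fun Z => a Z l ν) 0 := (ha l ν).of_le (by simp)
  have haρ l : ContDiffAt ℝ (k + 1) (aρ l) 0 := ContDiffAt.sum fun ν _ => (ha l ν).mul (hρ ν)
  have hφ := hφan.self_of_nhds
  exact le_antisymm (Ek_le_of_eventuallyEq_mulVec hφ hdφ0 hH hH0 hρ ha' hmul)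
    (Ek_le_of_eventuallyEq_mulVec hφ hdφ0 hH hH0 haρ (ContDiffAt.matrix_inv ha' hdet) hinv)

/-- the spaces `E_k(0)` do not depend on the choice of defining function:
replacing `ρ'` by `ρ̃ = a·ρ'` with `a` a real-analytic invertible-matrix-valued function
leaves `E_k(0)` unchanged. -/
theorem Ek_indep_defining_function {n d N' d' k : ℕ} (hn : 1 ≤ n) (hd : 1 ≤ d) (hd' : 1 ≤ d')
    -- the source manifold M, in normal form
    (φ : Dom n d → Fin d → ℝ)
    (hφan : ∀ᶠ p in 𝓝 (0 : Dom n d), AnalyticAt ℝ φ p)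
    (hφ0 : φ 0 = 0) (hdφ0 : fderiv ℝ φ 0 = 0)
    -- the target manifold M', generic through 0
    (ρ : Fin d' → (Fin N' → ℂ) → ℝ)
    (hρan : ∀ l, ∀ᶠ Z in 𝓝 (0 : Fin N' → ℂ), AnalyticAt ℝ (ρ l) Z)
    (hρ0 : ∀ l, ρ l 0 = 0)
    (hρind : LinearIndependent ℂ fun l : Fin d' => fun m => gradZ m (ρ l) 0)
    -- the CR map H : M → M' of class C^k
    (H : Dom n d → Fin N' → ℂ) (U : Set (Dom n d)) (hU : IsOpen U) (h0U : (0 : Dom n d) ∈ U)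
    (hHsm : ContDiffOn ℝ k H U) (hH0 : H 0 = 0)
    (hHCR : ∀ p ∈ U, ∀ j m, Lambda φ j (fun q => H q m) p = 0)
    (hHM' : ∀ p ∈ U, ∀ l, ρ l (H p) = 0)
    -- a real-analytic map into the invertible d'×d' real matrices
    (a : (Fin N' → ℂ) → Matrix (Fin d') (Fin d') ℝ)
    (haan : ∀ l m, ∀ᶠ Z in 𝓝 (0 : Fin N' → ℂ), AnalyticAt ℝ (fun Z' => a Z' l m) Z)
    (hainv : ∀ᶠ Z in 𝓝 (0 : Fin N' → ℂ), IsUnit (a Z)) :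
    -- conclusion: ρ̃ = a·ρ' defines the same spaces E_k(0)
    Ek φ (fun l Z => ∑ m, a Z l m * ρ m Z) H k = Ek φ ρ H k :=
  Ek_indep_defining_function_general φ hφan hdφ0 ρ hρan H U hU h0U hHsm hH0 hHM' a haan hainv
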